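/- Let ‖·‖ be an arbitrary norm on ℝ², and let φ : ℝ² → ℝ² be a map that preserves every positive rational distance, i.e., for every positive rational q and all x, y ∈ ℝ², ‖x − y‖ = q implies ‖φ(x) − φ(y)‖ = q. Then φ is an isometry: ‖φ(x) − φ(y)‖ = ‖x − y‖ for all x, y ∈ ℝ². -/

import Mathlib

/-!
For `x ≠ y` at `N`-distance `d` and radii `a > 0`, `b` with `|d - a| ≤ b ≤ d + a`, the
`N`-spheres of radius `a` about `x` and of radius `b` about `y` meet: turning the direction
from `x` through a half turn moves the point of the first sphere from the near side of `y`
to the far side, and the distance to `y` takes every value in between. Taking `a = b` a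
rational just above `d / 2` gives `N (φ x - φ y) ≤ 2 a`, and taking rationals with `a - b`
just below `d` gives `a - b ≤ N (φ x - φ y)`.
-/

/-- `N` is a norm on `ℝ²`. -/
structure IsNorm (N : ℝ × ℝ → ℝ) : Prop where
  add_le : ∀ x y : ℝ × ℝ, N (x + y) ≤ N x + N y
  smul_eq : ∀ (c : ℝ) (x : ℝ × ℝ), N (c • x) = |c| * N x
  eq_zero_of : ∀ x : ℝ × ℝ, N x = 0 → x = 0

/-- `N` is a URTC-norm: for every `a b` at `N`-distance `1`, there are exactly two
points `x` with `N (a - x) = 1` and `N (b - x) = 1`. -/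
def IsURTC (N : ℝ × ℝ → ℝ) : Prop :=
  ∀ a b : ℝ × ℝ, N (a - b) = 1 →
    {x : ℝ × ℝ | N (a - x) = 1 ∧ N (b - x) = 1}.encard = 2

noncomputable def rotate (θ : ℝ) (u : ℝ × ℝ) : ℝ × ℝ :=
  Real.cos θ • u + Real.sin θ • (-u.2, u.1)

lemma rotate_ne_zero (θ : ℝ) {u : ℝ × ℝ} (hu : u ≠ 0) : rotate θ u ≠ 0 := by
  intro h
  have h₁ : Real.cos θ * u.1 - Real.sin θ * u.2 = 0 := by
    simpa [rotate, sub_eq_add_neg] using congrArg Prod.fst h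
  have h₂ : Real.cos θ * u.2 + Real.sin θ * u.1 = 0 := by simpa [rotate] using congrArg Prod.snd h
  have hcs := Real.sin_sq_add_cos_sq θ
  have hu₁ : u.1 = 0 := by linear_combination Real.cos θ * h₁ + Real.sin θ * h₂ - u.1 * hcs
  have hu₂ : u.2 = 0 := by linear_combination -Real.sin θ * h₁ + Real.cos θ * h₂ - u.2 * hcs
  exact hu (Prod.ext hu₁ hu₂)

lemma continuous_rotate (u : ℝ × ℝ) : Continuous fun θ => rotate θ u := by
  unfold rotate; fun_prop

@[simp] lemma rotate_zero (u : ℝ × ℝ) : rotate 0 u = u := by simp [rotate]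

@[simp] lemma rotate_pi (u : ℝ × ℝ) : rotate Real.pi u = -u := by simp [rotate]

namespace IsNorm

variable {N : ℝ × ℝ → ℝ} (hN : IsNorm N)
include hN

def toSeminorm : Seminorm ℝ (ℝ × ℝ) :=
  Seminorm.of N hN.add_le fun c x => by rw [hN.smul_eq, Real.norm_eq_abs]

lemma nonneg (x : ℝ × ℝ) : 0 ≤ N x := apply_nonneg hN.toSeminorm x

lemma pos {x : ℝ × ℝ} (hx : x ≠ 0) : 0 < N x :=
  (hN.nonneg x).lt_of_ne fun h => hx (hN.eq_zero_of x h.symm)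

lemma map_neg (x : ℝ × ℝ) : N (-x) = N x := map_neg_eq_map hN.toSeminorm x

lemma map_sub_rev (x y : ℝ × ℝ) : N (x - y) = N (y - x) := _root_.map_sub_rev hN.toSeminorm x y

lemma map_sub_le_map_sub_add_map_sub (x y z : ℝ × ℝ) : N (x - z) ≤ N (x - y) + N (y - z) := by
  simpa using hN.add_le (x - y) (y - z)

lemma map_smul_of_nonneg {c : ℝ} (hc : 0 ≤ c) (x : ℝ × ℝ) : N (c • x) = c * N x := by
  rw [hN.smul_eq, abs_of_nonneg hc]

protected lemma continuous : Continuous N :=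
  continuousOn_univ.mp (hN.toSeminorm.convexOn.continuousOn isOpen_univ)

lemma exists_sub_eq_and_sub_eq {x y : ℝ × ℝ} (hxy : x ≠ y) {a b : ℝ} (ha : 0 < a)
    (hlo : |N (x - y) - a| ≤ b) (hhi : b ≤ N (x - y) + a) :
    ∃ z, N (x - z) = a ∧ N (y - z) = b := by
  obtain ⟨u, rfl⟩ : ∃ u, y = x + u := ⟨y - x, by abel⟩
  have hu : u ≠ 0 := by rintro rfl; simp at hxy
  have hNu : 0 < N u := hN.pos hu
  rw [show x - (x + u) = -u by abel, hN.map_neg] at hlo hhi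
  have hpos (θ : ℝ) : 0 < N (rotate θ u) := hN.pos (rotate_ne_zero θ hu)
  let z (θ : ℝ) : ℝ × ℝ := x + (a / N (rotate θ u)) • rotate θ u
  have hz (θ : ℝ) : N (x - z θ) = a := by
    rw [show x - z θ = -((a / N (rotate θ u)) • rotate θ u) by simp [z], hN.map_neg,
      hN.map_smul_of_nonneg (div_pos ha (hpos θ)).le, div_mul_cancel₀ _ (hpos θ).ne']
  have hcont : Continuous fun θ => N (x + u - z θ) := by
    have hNrot : Continuous fun θ => N (rotate θ u) := hN.continuous.comp (continuous_rotate u)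
    exact hN.continuous.comp <| continuous_const.sub <| continuous_const.add <|
      (continuous_const.div hNrot fun θ => (hpos θ).ne').smul (continuous_rotate u)
  have h₀ : N (x + u - z 0) = |N u - a| := by
    rw [show x + u - z 0 = ((N u - a) / N u) • u by
          simp only [z, rotate_zero]; rw [sub_div, div_self hNu.ne', sub_smul, one_smul]; abel,
      hN.smul_eq, abs_div, abs_of_pos hNu, div_mul_cancel₀ _ hNu.ne']
  have hπ : N (x + u - z Real.pi) = N u + a := by
    rw [show x + u - z Real.pi = ((N u + a) / N u) • u by
          simp only [z, rotate_pi, hN.map_neg, smul_neg]; rw [add_div, div_self hNu.ne', add_smul, one_smul]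
          abel,
      hN.map_smul_of_nonneg (by positivity), div_mul_cancel₀ _ hNu.ne']
  obtain ⟨θ, -, hθ⟩ := intermediate_value_Icc Real.pi_pos.le hcont.continuousOn
    (show b ∈ Set.Icc _ _ by rw [h₀, hπ]; exact ⟨hlo, hhi⟩)
  exact ⟨z θ, hz θ, hθ⟩

end IsNorm

def PreservesRationalDist (N : ℝ × ℝ → ℝ) (φ : ℝ × ℝ → ℝ × ℝ) : Prop :=
  ∀ q : ℚ, 0 < q → ∀ x y : ℝ × ℝ, N (x - y) = q → N (φ x - φ y) = q

namespace PreservesRationalDist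

variable {N : ℝ × ℝ → ℝ} {φ : ℝ × ℝ → ℝ × ℝ} (hφ : PreservesRationalDist N φ) (hN : IsNorm N)
  {x y : ℝ × ℝ}
include hφ hN

lemma apply_sub_le (hxy : x ≠ y) : N (φ x - φ y) ≤ N (x - y) := by
  refine le_of_forall_lt_rat_imp_le fun r hr => ?_
  have hd := hN.nonneg (x - y)
  have hr₀ : 0 < r := by exact_mod_cast hd.trans_lt hr
  obtain ⟨z, hxz, hyz⟩ := hN.exists_sub_eq_and_sub_eq hxy (a := ((r / 2 : ℚ) : ℝ))
    (b := ((r / 2 : ℚ) : ℝ)) (by positivity)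
    (abs_le.mpr ⟨by push_cast; linarith, by push_cast; linarith⟩) (by push_cast; linarith)
  calc N (φ x - φ y) ≤ N (φ x - φ z) + N (φ z - φ y) := hN.map_sub_le_map_sub_add_map_sub _ _ _
    _ = r := by
      rw [hN.map_sub_rev (φ z), hφ _ (by positivity) x z hxz, hφ _ (by positivity) y z hyz]
      push_cast
      ring

lemma le_apply_sub (hxy : x ≠ y) : N (x - y) ≤ N (φ x - φ y) := by
  refine le_of_forall_rat_lt_imp_le fun r hr => ?_
  rcases le_or_gt r 0 with hr₀ | hr₀
  · exact (Rat.cast_nonpos.mpr hr₀).trans (hN.nonneg _)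
  have hd := hN.nonneg (x - y)
  have hr₀' : (0 : ℝ) < r := Rat.cast_pos.mpr hr₀
  obtain ⟨b, hb⟩ := exists_rat_gt ((N (x - y) - r) / 2)
  have hb₀ : 0 < b := by exact_mod_cast (show (0 : ℝ) < b by linarith)
  obtain ⟨z, hxz, hyz⟩ := hN.exists_sub_eq_and_sub_eq hxy (a := ((b + r : ℚ) : ℝ)) (b := b)
    (by positivity) (abs_le.mpr ⟨by push_cast; linarith, by push_cast; linarith⟩)
    (by push_cast; linarith)
  have htri := hN.map_sub_le_map_sub_add_map_sub (φ x) (φ y) (φ z)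
  rw [hφ _ (by positivity) x z hxz, hφ _ hb₀ y z hyz] at htri
  push_cast at htri
  linarith

end PreservesRationalDist

/-- For any norm on `ℝ²`, a map preserving every positive rational distance is an
isometry. -/
theorem isometry_of_preserves_rational (N : ℝ × ℝ → ℝ) (hN : IsNorm N)
    (φ : ℝ × ℝ → ℝ × ℝ)
    (hφ : ∀ q : ℚ, 0 < q → ∀ x y : ℝ × ℝ, N (x - y) = (q : ℝ) →
      N (φ x - φ y) = (q : ℝ)) :
    ∀ x y : ℝ × ℝ, N (φ x - φ y) = N (x - y) := by
  have hφ' : PreservesRationalDist N φ := hφ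
  intro x y
  rcases eq_or_ne x y with rfl | hxy
  · rw [sub_self, sub_self]
  · exact le_antisymm (hφ'.apply_sub_le hN hxy) (hφ'.le_apply_sub hN hxy)
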